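/- Roach motel reordering is a valid refinement: for the concrete threads T and T' defined below, check(T',T) holds. -/

import Mathlib

namespace DRF

/-! Common model: shared-memory concurrency with locks (SC-for-DRF). -/

/-- An action: read or write a memory location, or acquire/release a lock. -/
inductive Action (M L : Type) : Type where
  | rd : M → Action M L
  | wr : M → Action M L
  | lk : L → Action M L
  | ul : L → Action M L
deriving DecidableEq

/-- A thread: a deterministic labelled transition system with program counters `H`,
initial counter `h0`, and a partial step function; `rd/lk/ul` leave the state unchanged,
a `wr x` step may change the state only at `x`. -/
structure Thread (M L : Type) where
  H : Type
  h0 : H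
  step : H → (M → ℤ) → Option (Action M L × H × (M → ℤ))
  wf : ∀ h s a h' s', step h s = some (a, h', s') →
      ((∀ x, a ≠ Action.wr x) → s' = s) ∧
      (∀ x, a = Action.wr x → ∀ y, y ≠ x → s' y = s y)

/-- A program: a finite family of threads. -/
structure Program (M L : Type) where
  n : ℕ
  threads : Fin n → Thread M L

/-- A configuration: one program counter per thread, a state, and a lock map. -/
structure Config {M L : Type} (P : Program M L) where
  pcs : ∀ i : Fin P.n, (P.threads i).H
  st : M → ℤ
  lks : L → Option (Fin P.n)

/-- The interleaving transition relation: thread `i` performs its next step with action `a`. -/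
def ProgStep {M L : Type} [DecidableEq M] [DecidableEq L] (P : Program M L)
    (c : Config P) (i : Fin P.n) (a : Action M L) (c' : Config P) : Prop :=
  ∃ (h' : (P.threads i).H) (s' : M → ℤ),
    (P.threads i).step (c.pcs i) c.st = some (a, h', s') ∧
    c'.pcs = Function.update c.pcs i h' ∧
    c'.st = s' ∧
    (match a with
     | Action.rd _ => c'.lks = c.lks
     | Action.wr _ => c'.lks = c.lks
     | Action.lk l => c.lks l = none ∧ c'.lks = Function.update c.lks l (some i)
     | Action.ul l => c.lks l = some i ∧ c'.lks = Function.update c.lks l none)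

/-- An execution prefix of `P` from state `s0` with `n` transition steps. -/
structure ExecPrefix {M L : Type} [DecidableEq M] [DecidableEq L] (P : Program M L)
    (s0 : M → ℤ) (n : ℕ) where
  cfg : Fin (n + 1) → Config P
  thr : Fin n → Fin P.n
  act : Fin n → Action M L
  init_pcs : ∀ i, (cfg 0).pcs i = (P.threads i).h0
  init_st : (cfg 0).st = s0
  init_lks : ∀ l, (cfg 0).lks l = none
  steps : ∀ k : Fin n, ProgStep P (cfg k.castSucc) (thr k) (act k) (cfg k.succ)

variable {M L : Type} [DecidableEq M] [DecidableEq L]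

/-- Action `a` is a memory access of location `x`. -/
def isAccess (a : Action M L) (x : M) : Prop := a = Action.rd x ∨ a = Action.wr x

/-- Steps `i` and `j` conflict: both access the same location and at least one writes it. -/
def Conflict {P : Program M L} {s0 : M → ℤ} {n : ℕ} (e : ExecPrefix P s0 n)
    (i j : Fin n) : Prop :=
  ∃ x : M, isAccess (e.act i) x ∧ isAccess (e.act j) x ∧
    (e.act i = Action.wr x ∨ e.act j = Action.wr x)

/-- Sequenced-before. -/
def sb {P : Program M L} {s0 : M → ℤ} {n : ℕ} (e : ExecPrefix P s0 n) (i j : Fin n) : Prop :=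
  i < j ∧ e.thr i = e.thr j

/-- Synchronizes-with. -/
def sw {P : Program M L} {s0 : M → ℤ} {n : ℕ} (e : ExecPrefix P s0 n) (i j : Fin n) : Prop :=
  i < j ∧ ∃ l : L, e.act i = Action.ul l ∧ e.act j = Action.lk l

/-- Happens-before: the transitive closure of `sb ∪ sw`. -/
def hb {P : Program M L} {s0 : M → ℤ} {n : ℕ} (e : ExecPrefix P s0 n) (i j : Fin n) : Prop :=
  Relation.TransGen (fun p q => sb e p q ∨ sw e p q) i j

/-- `e` contains an hb data race. -/
def hbrace {P : Program M L} {s0 : M → ℤ} {n : ℕ} (e : ExecPrefix P s0 n) : Prop :=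
  ∃ i j : Fin n, i < j ∧ e.thr i ≠ e.thr j ∧ Conflict e i j ∧ ¬ hb e i j

/-- `e` contains an adjacent-access data race. -/
def aarace {P : Program M L} {s0 : M → ℤ} {n : ℕ} (e : ExecPrefix P s0 n) : Prop :=
  ∃ i j : Fin n, (j : ℕ) = (i : ℕ) + 1 ∧ e.thr i ≠ e.thr j ∧ Conflict e i j

/-- Some execution of `P` contains an adjacent-access data race. -/
def race (P : Program M L) : Prop :=
  ∃ (s0 : M → ℤ) (n : ℕ) (e : ExecPrefix P s0 n), aarace e

def racefree (P : Program M L) : Prop := ¬ race P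

/-- All threads have terminated in configuration `c`. -/
def terminatedAll (P : Program M L) (c : Config P) : Prop :=
  ∀ i : Fin P.n, (P.threads i).step (c.pcs i) c.st = none

/-- Program semantics: the set of initial/final state pairs of finite complete executions. -/
def Msem (P : Program M L) : Set ((M → ℤ) × (M → ℤ)) :=
  { p | ∃ (n : ℕ) (e : ExecPrefix P p.1 n),
      terminatedAll P (e.cfg (Fin.last n)) ∧ (e.cfg (Fin.last n)).st = p.2 }

/-- `T ∥ C`: the program consisting of `T` together with the threads of `C`. -/
def par (T : Thread M L) (C : Program M L) : Program M L :=
  ⟨C.n + 1, Fin.cons T C.threads⟩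

/-! Thread-alone executions. -/

/-- An execution fragment of thread `T` run alone, with `n` steps. -/
structure Frag (T : Thread M L) (n : ℕ) where
  pc : Fin (n + 1) → T.H
  st : Fin (n + 1) → (M → ℤ)
  act : Fin n → Action M L
  steps : ∀ k : Fin n, T.step (pc k.castSucc) (st k.castSucc) = some (act k, pc k.succ, st k.succ)

/-- An infinite execution of thread `T` run alone. -/
structure InfRun (T : Thread M L) where
  pc : ℕ → T.H
  st : ℕ → (M → ℤ)
  act : ℕ → Action M L
  steps : ∀ k : ℕ, T.step (pc k) (st k) = some (act k, pc (k + 1), st (k + 1))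

/-- Number of `lk l` steps among the first `k` steps of `f`. -/
def lkCnt {T : Thread M L} {n : ℕ} (f : Frag T n) (l : L) (k : ℕ) : ℕ :=
  (Finset.univ.filter (fun i : Fin n => (i : ℕ) < k ∧ f.act i = Action.lk l)).card

/-- Number of `ul l` steps among the first `k` steps of `f`. -/
def ulCnt {T : Thread M L} {n : ℕ} (f : Frag T n) (l : L) (k : ℕ) : ℕ :=
  (Finset.univ.filter (fun i : Fin n => (i : ℕ) < k ∧ f.act i = Action.ul l)).card

/-- `T` is well-locked for lock `l`: run alone from its initial counter, its first step is
`lk l`; `lk l` and `ul l` steps strictly alternate starting with `lk l`; every infinite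
execution contains infinitely many lock operations; and every terminated execution has as
many `ul l` steps as `lk l` steps (the last `lk l` is matched by an `ul l`). -/
def WellLocked (T : Thread M L) (l : L) : Prop :=
  (∀ s a h' s', T.step T.h0 s = some (a, h', s') → a = Action.lk l) ∧
  (∀ (n : ℕ) (f : Frag T n), f.pc 0 = T.h0 →
     ∀ k : Fin n,
       (f.act k = Action.lk l → lkCnt f l k = ulCnt f l k) ∧
       (f.act k = Action.ul l → lkCnt f l k = ulCnt f l k + 1)) ∧
  (∀ r : InfRun T, r.pc 0 = T.h0 →
     ∀ m : ℕ, ∃ k : ℕ, m ≤ k ∧ ((∃ l' : L, r.act k = Action.lk l') ∨ (∃ l' : L, r.act k = Action.ul l'))) ∧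
  (∀ (n : ℕ) (f : Frag T n), f.pc 0 = T.h0 →
     T.step (f.pc (Fin.last n)) (f.st (Fin.last n)) = none →
     lkCnt f l n = ulCnt f l n)

/-- Action `a` is a memory access (read or write). -/
def isMem : Action M L → Prop
  | Action.rd _ => True
  | Action.wr _ => True
  | _ => False

/-- `(T,h,s) →* (T,h',s')` with label `(l,(Ra,Wa),(Rb,Wb))`: `T` run alone goes from `(h,s)`
to `(h',s')` by one `lk l` step, then memory steps, one `ul l` step, then memory steps,
ending exactly when `T`'s next action is a lock acquire or `T` has terminated; `Ra`/`Wa` are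
the locations read/written strictly between the `lk` and the `ul`, and `Rb`/`Wb` those
read/written after the `ul`. -/
def StarStep (T : Thread M L) (h : T.H) (s : M → ℤ) (l : L)
    (Ra Wa Rb Wb : Set M) (h' : T.H) (s' : M → ℤ) : Prop :=
  ∃ (n : ℕ) (f : Frag T n) (hn : 0 < n) (k : Fin n),
    f.pc 0 = h ∧ f.st 0 = s ∧
    f.pc (Fin.last n) = h' ∧ f.st (Fin.last n) = s' ∧
    f.act ⟨0, hn⟩ = Action.lk l ∧
    f.act k = Action.ul l ∧
    (∀ i : Fin n, 0 < (i : ℕ) → (i : ℕ) < (k : ℕ) → isMem (f.act i)) ∧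
    (∀ i : Fin n, (k : ℕ) < (i : ℕ) → isMem (f.act i)) ∧
    ((∃ (l'' : L) (h'' : T.H) (s'' : M → ℤ), T.step h' s' = some (Action.lk l'', h'', s'')) ∨
      T.step h' s' = none) ∧
    Ra = {x : M | ∃ i : Fin n, 0 < (i : ℕ) ∧ (i : ℕ) < (k : ℕ) ∧ f.act i = Action.rd x} ∧
    Wa = {x : M | ∃ i : Fin n, 0 < (i : ℕ) ∧ (i : ℕ) < (k : ℕ) ∧ f.act i = Action.wr x} ∧
    Rb = {x : M | ∃ i : Fin n, (k : ℕ) < (i : ℕ) ∧ f.act i = Action.rd x} ∧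
    Wb = {x : M | ∃ i : Fin n, (k : ℕ) < (i : ℕ) ∧ f.act i = Action.wr x}

/-- A state trace with `m` lock-to-lock transitions: trace item `2*j` (at a `lk`) is
`(lkOf j, sE j, RE j, WE j)` and trace item `2*j+1` (from the `ul` to the next `lk`) is
`(RO j, WO j, sO j)`; components at indices `≥ m` are irrelevant junk. -/
structure STrace (M L : Type) where
  m : ℕ
  lkOf : ℕ → L
  sE : ℕ → (M → ℤ)
  sO : ℕ → (M → ℤ)
  RE : ℕ → Set M
  WE : ℕ → Set M
  RO : ℕ → Set M
  WO : ℕ → Set M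

/-- Accessed locations at even item `2*j`. -/
def AE {M L : Type} (t : STrace M L) (j : ℕ) : Set M := t.RE j ∪ t.WE j

/-- Accessed locations at odd item `2*j+1`. -/
def AO {M L : Type} (t : STrace M L) (j : ℕ) : Set M := t.RO j ∪ t.WO j

/-- The state trace set `𝕊(T)` of a thread `T`. -/
def STraces (T : Thread M L) : Set (STrace M L) :=
  { t | ∃ h : ℕ → T.H,
      h 0 = T.h0 ∧
      (∀ j < t.m, StarStep T (h j) (t.sE j) (t.lkOf j)
        (t.RE j) (t.WE j) (t.RO j) (t.WO j) (h (j + 1)) (t.sO j)) ∧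
      (∀ j, 0 < j → j < t.m → ∀ x ∈ AO t (j - 1), t.sO (j - 1) x = t.sE j x) }

/-- The length-`2*m` prefixes of the state traces `t'` and `t` match
(primed components from `t'`, unprimed from `t`). -/
def matchN {M L : Type} (t' t : STrace M L) (m : ℕ) : Prop :=
  (∀ j < m, t'.lkOf j = t.lkOf j) ∧
  (∀ j < m, t'.RE j ⊆ (if j = 0 then (∅ : Set M) else AO t (j - 1)) ∪ AE t j ∪ AO t j) ∧
  (∀ j < m, t'.WE j ⊆ (if j = 0 then (∅ : Set M) else t.WO (j - 1)) ∪ t.WE j ∪ t.WO j) ∧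
  (∀ j < m, t'.RO j ⊆ AO t j) ∧
  (∀ j < m, t'.WO j ⊆ t.WO j) ∧
  (∀ j < m, ∀ x : M, (j = 0 ∨ x ∉ AO t (j - 1)) → t'.sE j x = t.sE j x) ∧
  (∀ j, 0 < j → j < m → ∀ x ∈ AO t (j - 1) \ AO t' (j - 1), t'.sO (j - 1) x = t'.sE j x) ∧
  (∀ j < m, ∀ x ∉ t.WO j, t'.sO j x = t.sO j x)

/-- Two complete state traces match. -/
def matchTr {M L : Type} (t' t : STrace M L) : Prop :=
  t'.m = t.m ∧ matchN t' t t.m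

/-- The state-based refinement check `check(T',T)`. -/
def check (T' T : Thread M L) : Prop :=
  ∀ t' ∈ STraces T', ∃ t ∈ STraces T,
    matchTr t' t ∨
    (∃ p : ℕ, 0 < p ∧ p < t'.m ∧ p ≤ t.m ∧ matchN t' t p ∧
      ∃ x ∈ AO t (p - 1) \ AO t' (p - 1), t'.sO (p - 1) x ≠ t'.sE p x)

/-- Refinement `ref(T',T)`: for every context `C` (a finite family of threads well-locked
for `l`), if `T ∥ C` is race free then so is `T' ∥ C` and `𝕄(T' ∥ C) ⊆ 𝕄(T ∥ C)`. -/
def ref (T' T : Thread M L) (l : L) : Prop :=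
  ∀ C : Program M L, (∀ i : Fin C.n, WellLocked (C.threads i) l) →
    racefree (par T C) →
    racefree (par T' C) ∧ Msem (par T' C) ⊆ Msem (par T C)

/-- In configuration `c`, the next action of thread `t` is a lock acquire. -/
def nextIsLk (P : Program M L) (c : Config P) (t : Fin P.n) : Prop :=
  ∃ (l : L) (h' : (P.threads t).H) (s' : M → ℤ),
    (P.threads t).step (c.pcs t) c.st = some (Action.lk l, h', s')

/-- In configuration `c`, thread `t` has terminated. -/
def termAt (P : Program M L) (c : Config P) (t : Fin P.n) : Prop :=
  (P.threads t).step (c.pcs t) c.st = none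


/-! Concrete threads: memory locations `M = Fin 2` (`0` is `x`, `1` is `y`),
locks `L = Fin 1` (`0` is `l`). -/

/-- Step function of the original thread `T`: `lk l; x := 1; y := 1; ul l; y := 2; stop`. -/
def stepOrig : Fin 6 → (Fin 2 → ℤ) → Option (Action (Fin 2) (Fin 1) × Fin 6 × (Fin 2 → ℤ)) :=
  fun h s =>
    if h = 0 then some (Action.lk 0, 1, s)
    else if h = 1 then some (Action.wr 0, 2, Function.update s 0 1)
    else if h = 2 then some (Action.wr 1, 3, Function.update s 1 1)
    else if h = 3 then some (Action.ul 0, 4, s)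
    else if h = 4 then some (Action.wr 1, 5, Function.update s 1 2)
    else none

/-- The original thread `T`: `lk l; x := 1; y := 1; ul l; y := 2`. -/
def Torig : Thread (Fin 2) (Fin 1) where
  H := Fin 6
  h0 := 0
  step := stepOrig
  wf := by
    intro h s a h' s' hst
    fin_cases h <;> simp [stepOrig] at hst
    all_goals obtain ⟨rfl, rfl, rfl⟩ := hst
    all_goals constructor
    all_goals first
      | (intro hx; exact absurd rfl (hx _))
      | (intro _; rfl)
      | (intro x hx y hy
         cases hx
         exact Function.update_of_ne hy _ _)
      | (intro x hx; exact absurd hx (by simp))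

/-- Step function of the transformed thread `T'` (roach motel reordering):
`lk l; x := 1; y := 1; y := 2; ul l; stop`. -/
def stepTrans : Fin 6 → (Fin 2 → ℤ) → Option (Action (Fin 2) (Fin 1) × Fin 6 × (Fin 2 → ℤ)) :=
  fun h s =>
    if h = 0 then some (Action.lk 0, 1, s)
    else if h = 1 then some (Action.wr 0, 2, Function.update s 0 1)
    else if h = 2 then some (Action.wr 1, 3, Function.update s 1 1)
    else if h = 3 then some (Action.wr 1, 4, Function.update s 1 2)
    else if h = 4 then some (Action.ul 0, 5, s)
    else none

/-- The transformed thread `T'`: `lk l; x := 1; y := 1; y := 2; ul l`. -/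
def Ttrans : Thread (Fin 2) (Fin 1) where
  H := Fin 6
  h0 := 0
  step := stepTrans
  wf := by
    intro h s a h' s' hst
    fin_cases h <;> simp [stepTrans] at hst
    all_goals obtain ⟨rfl, rfl, rfl⟩ := hst
    all_goals constructor
    all_goals first
      | (intro hx; exact absurd rfl (hx _))
      | (intro _; rfl)
      | (intro x hx y hy
         cases hx
         exact Function.update_of_ne hy _ _)
      | (intro x hx; exact absurd hx (by simp))

end DRF

/-! `T'` moves `y := 2` from after the unlock of `T` into its critical section. Each thread
makes a single lock-to-lock transition, and both end in `s[x := 1][y := 1][y := 2]`. The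
critical section of `T` already writes every location, so it covers every access of `T'`, and
`T'` accesses nothing after its unlock; hence the trace of `T` with the same initial state
and final state matches every trace of `T'`. -/

namespace DRF

section Determinism

variable {M L : Type} {T : Thread M L} {n n' : ℕ}

theorem Frag.step_mk (f : Frag T n) (i : ℕ) (hi : i < n) :
    T.step (f.pc ⟨i, by omega⟩) (f.st ⟨i, by omega⟩) =
      some (f.act ⟨i, hi⟩, f.pc ⟨i + 1, by omega⟩, f.st ⟨i + 1, by omega⟩) :=
  f.steps ⟨i, hi⟩

theorem Frag.pc_st_eq_of_start (f : Frag T n) (g : Frag T n') (hpc : f.pc 0 = g.pc 0)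
    (hst : f.st 0 = g.st 0) :
    ∀ (i : ℕ) (hi : i < n + 1) (hi' : i < n' + 1),
      f.pc ⟨i, hi⟩ = g.pc ⟨i, hi'⟩ ∧ f.st ⟨i, hi⟩ = g.st ⟨i, hi'⟩
  | 0, _, _ => ⟨hpc, hst⟩
  | i + 1, hi, hi' => by
    obtain ⟨hpc_i, hst_i⟩ := pc_st_eq_of_start f g hpc hst i (by omega) (by omega)
    have hf := f.step_mk i (by omega)
    rw [hpc_i, hst_i, g.step_mk i (by omega)] at hf
    simp only [Option.some.injEq, Prod.mk.injEq] at hf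
    exact ⟨hf.2.1.symm, hf.2.2.symm⟩

theorem Frag.act_eq_of_start (f : Frag T n) (g : Frag T n') (hpc : f.pc 0 = g.pc 0)
    (hst : f.st 0 = g.st 0) (i : ℕ) (hi : i < n) (hi' : i < n') :
    f.act ⟨i, hi⟩ = g.act ⟨i, hi'⟩ := by
  obtain ⟨hpc_i, hst_i⟩ := f.pc_st_eq_of_start g hpc hst i (by omega) (by omega)
  have hf := f.step_mk i hi
  rw [hpc_i, hst_i, g.step_mk i hi'] at hf
  simp only [Option.some.injEq, Prod.mk.injEq] at hf
  exact hf.1.symm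

theorem Frag.length_le_of_step_eq_none (f : Frag T n) (g : Frag T n')
    (hpc : f.pc 0 = g.pc 0) (hst : f.st 0 = g.st 0)
    (hg : T.step (g.pc (Fin.last n')) (g.st (Fin.last n')) = none) : n ≤ n' := by
  by_contra! hlt
  obtain ⟨hpc_n', hst_n'⟩ := f.pc_st_eq_of_start g hpc hst n' (by omega) (by omega)
  have hf := f.step_mk n' hlt
  rw [hpc_n', hst_n'] at hf
  exact Option.some_ne_none _ (hf.symm.trans hg)

theorem StarStep.step_ne_none {h h' : T.H} {s s' : M → ℤ} {l : L} {Ra Wa Rb Wb : Set M}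
    (H : StarStep T h s l Ra Wa Rb Wb h' s') : T.step h s ≠ none := by
  obtain ⟨n, f, hn, -, hpc, hst, -⟩ := H
  have hf := f.steps ⟨0, hn⟩
  rw [← hpc, ← hst]
  exact hf ▸ Option.some_ne_none _

end Determinism

def finalSt (s : Fin 2 → ℤ) : Fin 2 → ℤ :=
  Function.update (Function.update (Function.update s 0 1) 1 1) 1 2

def transFrag (s : Fin 2 → ℤ) : Frag Ttrans 5 where
  pc i := i
  st := ![s, s, Function.update s 0 1, Function.update (Function.update s 0 1) 1 1,
    finalSt s, finalSt s]
  act := ![.lk 0, .wr 0, .wr 1, .wr 1, .ul 0]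
  steps k := by fin_cases k <;> rfl

def origFrag (s : Fin 2 → ℤ) : Frag Torig 5 where
  pc i := i
  st := ![s, s, Function.update s 0 1, Function.update (Function.update s 0 1) 1 1,
    Function.update (Function.update s 0 1) 1 1, finalSt s]
  act := ![.lk 0, .wr 0, .wr 1, .ul 0, .wr 1]
  steps k := by fin_cases k <;> rfl

theorem starStep_Ttrans {s s' : Fin 2 → ℤ} {l : Fin 1} {Ra Wa Rb Wb : Set (Fin 2)} {h' : Fin 6}
    (H : StarStep Ttrans (0 : Fin 6) s l Ra Wa Rb Wb h' s') :
    h' = 5 ∧ s' = finalSt s ∧ Rb = ∅ ∧ Wb = ∅ := by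
  obtain ⟨n, f, hn, k, hpc, hst, hpc_last, hst_last, -, hul, -, -, -, -, -, hRb, hWb⟩ := H
  have hstart : f.st 0 = (transFrag s).st 0 := hst
  have hn5 : n ≤ 5 := f.length_le_of_step_eq_none (transFrag s) hpc hstart rfl
  have hk : (k : ℕ) = 4 := by
    have hact := f.act_eq_of_start (transFrag s) hpc hstart k k.2 (by omega)
    rw [Fin.eta, hul] at hact
    have hk5 : (k : ℕ) < 5 := by omega
    generalize hj : (⟨k, hk5⟩ : Fin 5) = j at hact
    fin_cases j <;> simp_all [transFrag, Fin.ext_iff]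
  obtain rfl : n = 5 := by omega
  obtain ⟨hpc5, hst5⟩ := f.pc_st_eq_of_start (transFrag s) hpc hstart 5 (by omega) (by omega)
  subst hRb hWb
  refine ⟨hpc_last ▸ hpc5, hst_last ▸ hst5, ?_, ?_⟩ <;>
  · ext x
    simp only [Set.mem_ofPred_eq, Set.mem_empty_iff_false, iff_false, not_exists, hk]
    omega

theorem starStep_Torig (s : Fin 2 → ℤ) (l : Fin 1) :
    StarStep Torig (0 : Fin 6) s l ∅ Set.univ ∅ {1} (5 : Fin 6) (finalSt s) := by
  obtain rfl := Subsingleton.elim l 0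
  refine ⟨5, origFrag s, by norm_num, 3, rfl, rfl, rfl, rfl, rfl, rfl, ?_, ?_, Or.inr rfl,
    ?_, ?_, ?_, ?_⟩
  · intro i; fin_cases i <;> simp [origFrag, isMem]
  · intro i; fin_cases i <;> simp [origFrag, isMem]
  all_goals ext x; fin_cases x <;> simp [origFrag, Fin.exists_fin_succ]

theorem mem_STraces_Ttrans {t : STrace (Fin 2) (Fin 1)} (ht : t ∈ STraces Ttrans) :
    t.m ≤ 1 ∧ (0 < t.m → t.sO 0 = finalSt (t.sE 0) ∧ t.RO 0 = ∅ ∧ t.WO 0 = ∅) := by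
  obtain ⟨h, hh0, hstar, -⟩ := ht
  rcases Nat.eq_zero_or_pos t.m with hm | hm
  · simp [hm]
  have hfirst := hstar 0 hm
  rw [hh0] at hfirst
  obtain ⟨hh1, hfinal⟩ := starStep_Ttrans hfirst
  refine ⟨?_, fun _ => hfinal⟩
  by_contra! h2
  exact (hstar 1 h2).step_ne_none (by rw [hh1]; rfl)

def origTraceOf (t' : STrace (Fin 2) (Fin 1)) : STrace (Fin 2) (Fin 1) :=
  { t' with RE := fun _ => ∅, WE := fun _ => Set.univ, RO := fun _ => ∅, WO := fun _ => {1} }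

/-- Roach motel reordering is a valid refinement: `check(T',T)` holds. -/
theorem roach_motel_check : check Ttrans Torig := by
  intro t' ht'
  obtain ⟨hm, htrans⟩ := mem_STraces_Ttrans ht'
  have hj0 : ∀ j < t'.m, j = 0 := fun j hj => by omega
  have hlink : ∀ j, 0 < j → j < (origTraceOf t').m → False := fun j hj hj' => by
    have : (origTraceOf t').m ≤ 1 := hm
    omega
  refine ⟨origTraceOf t', ⟨fun j => (if j = 0 then 0 else 5 : Fin 6), rfl, ?_,
    fun j hj hj' => (hlink j hj hj').elim⟩, Or.inl ⟨rfl, fun _ _ => rfl,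
    fun _ _ => by simp [origTraceOf, AE], fun _ _ => by simp [origTraceOf], ?_, ?_,
    fun _ _ _ _ => rfl, fun j hj hj' => (hlink j hj hj').elim, fun _ _ _ _ => rfl⟩⟩
  · intro j hj
    obtain rfl := hj0 j hj
    have hstep := starStep_Torig (t'.sE 0) (t'.lkOf 0)
    rwa [← (htrans hj).1] at hstep
  · intro j hj
    obtain rfl := hj0 j hj
    simp [origTraceOf, (htrans hj).2.1]
  · intro j hj
    obtain rfl := hj0 j hj
    simp [origTraceOf, (htrans hj).2.2]

end DRF
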